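/- Assume q = 0, the support of ν is contained in [0, +∞), ∫_{[1,∞)} y ν(dy) < ∞, and the restriction of ν to (0,1) is absolutely continuous with respect to Lebesgue measure. Assume further there is a function M varying slowly at 0 such that ∫_{(0,x]} y² ν(dy) / (x · M(x)) → 1 as x → 0⁺, and that M(x) → 0 as x → 0⁺ while ∫₀¹ M(x)/x dx = +∞. Then for every constant c > 0 one has limsup_{z→∞} ( ln z − c · J′(z) ) = +∞. -/

import Mathlib

open MeasureTheory

/-- The topological support of a measure on `ℝ`. -/
def measureSupport (ν : Measure ℝ) : Set ℝ :=
  {x : ℝ | ∀ U : Set ℝ, IsOpen U → x ∈ U → ν U ≠ 0}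

/-- The derivative of the Laplace exponent:
`J′(z) = −a + qz + ∫ y (𝟙_{(−1,1)}(y) − e^{−zy}) ν(dy)`. -/
noncomputable def Jprime (ν : Measure ℝ) (a q : ℝ) (z : ℝ) : ℝ :=
  -a + q * z + ∫ y, y * ((Set.Ioo (-1 : ℝ) 1).indicator 1 y - Real.exp (-(z * y))) ∂ν

/-!
Since `ν` is carried by `[0, ∞)`, `J′(z) + a ≤ ∫_{(0,1]} y (zy ∧ 1) ν(dy)`. Because `M → 0`, the
hypothesis on `M` gives `∫_{(0,x]} y² ν(dy) ≤ κ x` near `0` for any `κ > 0`. Then `(0, 1/z]`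
contributes at most `z ∫_{(0,1/z]} y² ν(dy) ≤ κ`, each dyadic shell `(x/2, x]` contributes at most
`(2/x) ∫_{(0,x]} y² ν(dy) ≤ 2κ`, and `(1/z, δ]` is covered by about `log₂ z` shells. Hence
`J′(z) ≤ ε ln z + O(1)` for every `ε > 0`, so `ln z − c J′(z) → +∞`.
-/

open Filter Set Topology
open scoped ENNReal

lemma tendsto_div_zero_of_div_mul_tendsto_one {G M : ℝ → ℝ} {l : Filter ℝ}
    (hGM : Tendsto (fun x => G x / (x * M x)) l (𝓝 1)) (hM : Tendsto M l (𝓝 0)) :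
    Tendsto (fun x => G x / x) l (𝓝 0) := by
  have hprod : Tendsto (fun x => G x / (x * M x) * M x) l (𝓝 0) := by
    simpa using hGM.mul hM
  refine hprod.congr' ?_
  filter_upwards [hGM.eventually_ne one_ne_zero] with x hx
  have hxM : x * M x ≠ 0 := fun h => hx (by simp [h])
  field_simp [hxM, (mul_ne_zero_iff.1 hxM).2]

lemma exists_forall_Ioc_le_mul_of_tendsto_div {G : ℝ → ℝ}
    (hG : Tendsto (fun x => G x / x) (𝓝[>] 0) (𝓝 0)) {κ : ℝ} (hκ : 0 < κ) :
    ∃ δ ∈ Ioc (0 : ℝ) 1, ∀ x ∈ Ioc 0 δ, G x ≤ κ * x := by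
  obtain ⟨u, hu, hsub⟩ := mem_nhdsGT_iff_exists_Ioc_subset.1 (hG.eventually_lt_const hκ)
  refine ⟨min u 1, ⟨lt_min hu zero_lt_one, min_le_right _ _⟩, fun x hx => ?_⟩
  have hlt : G x / x < κ := hsub ⟨hx.1, hx.2.trans (min_le_left _ _)⟩
  rw [div_lt_iff₀ hx.1] at hlt
  exact hlt.le

lemma exists_nat_le_two_pow_of_one_le {z : ℝ} (hz : 1 ≤ z) :
    ∃ n : ℕ, z ≤ 2 ^ n ∧ (n : ℝ) ≤ Real.logb 2 z + 1 := by
  have hlog : 0 ≤ Real.logb 2 z := Real.logb_nonneg one_lt_two hz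
  refine ⟨⌈Real.logb 2 z⌉₊, ?_, (Nat.ceil_lt_add_one hlog).le⟩
  rw [← Real.rpow_natCast, ← Real.logb_le_iff_le_rpow one_lt_two (by linarith)]
  exact Nat.le_ceil _

lemma tendsto_log_sub_mul_atTop {F : ℝ → ℝ}
    (hF : ∀ ε > 0, ∃ C, ∀ᶠ z in atTop, F z ≤ ε * Real.log z + C) {c : ℝ} (hc : 0 < c) :
    Tendsto (fun z => Real.log z - c * F z) atTop atTop := by
  obtain ⟨C, hC⟩ := hF (1 / (2 * c)) (by positivity)
  have hhalf : Tendsto (fun z => Real.log z / 2 - c * C) atTop atTop :=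
    tendsto_atTop_add_const_right _ _ (Real.tendsto_log_atTop.atTop_div_const two_pos)
  refine tendsto_atTop_mono' _ ?_ hhalf
  filter_upwards [hC] with z hz
  have := mul_le_mul_of_nonneg_left hz hc.le
  have hcancel : c * (1 / (2 * c) * Real.log z) = Real.log z / 2 := by field_simp
  rw [mul_add, hcancel] at this
  linarith

lemma mul_indicator_sub_exp_le {y z : ℝ} (hy : 0 ≤ y) (hz : 0 ≤ z) :
    y * ((Ioo (-1 : ℝ) 1).indicator 1 y - Real.exp (-(z * y))) ≤
      (Ioc 0 1).indicator (fun y => y * min (z * y) 1) y := by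
  rcases hy.eq_or_lt with rfl | hy0
  · simp
  by_cases hy1 : y < 1
  · rw [indicator_of_mem (show y ∈ Ioo (-1) 1 from ⟨by linarith, hy1⟩),
      indicator_of_mem (show y ∈ Ioc 0 1 from ⟨hy0, hy1.le⟩), Pi.one_apply]
    gcongr
    exact le_min (by linarith [Real.add_one_le_exp (-(z * y))])
      (by linarith [Real.exp_pos (-(z * y))])
  · rw [indicator_of_notMem fun h => hy1 h.2]
    have hg : 0 ≤ (Ioc 0 1).indicator (fun y => y * min (z * y) 1) y :=
      indicator_nonneg
        (fun y hy => mul_nonneg hy.1.le (le_min (mul_nonneg hz hy.1.le) zero_le_one)) y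
    nlinarith [Real.exp_pos (-(z * y))]

lemma abs_mul_indicator_sub_exp_le {y z : ℝ} (hy : 0 ≤ y) (hz : 0 ≤ z) :
    |y * ((Ioo (-1 : ℝ) 1).indicator 1 y - Real.exp (-(z * y)))| ≤
      (Icc 0 1).indicator (fun y => z * y ^ 2) y + (Ici 1).indicator id y := by
  have hexp : Real.exp (-(z * y)) ≤ 1 := Real.exp_le_one_iff.2 (neg_nonpos.2 (mul_nonneg hz hy))
  by_cases hy1 : y < 1
  · rw [indicator_of_mem (show y ∈ Ioo (-1) 1 from ⟨by linarith, hy1⟩),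
      indicator_of_mem (show y ∈ Icc 0 1 from ⟨hy, hy1.le⟩),
      indicator_of_notMem (show y ∉ Ici 1 from not_le.2 hy1), Pi.one_apply, add_zero,
      abs_of_nonneg (mul_nonneg hy (by linarith))]
    nlinarith [Real.add_one_le_exp (-(z * y))]
  · have hIcc : 0 ≤ (Icc 0 1).indicator (fun y => z * y ^ 2) y :=
      indicator_nonneg (fun y _ => by positivity) y
    rw [indicator_of_notMem (show y ∉ Ioo (-1) 1 from fun h => hy1 h.2),
      indicator_of_mem (show y ∈ Ici 1 from not_lt.1 hy1),
      zero_sub, mul_neg, abs_neg, abs_of_nonneg (by positivity), id]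
    nlinarith

lemma setLIntegral_ofReal_le_ofReal_mul {α : Type*} [MeasurableSpace α] {μ : Measure α}
    {s t : Set α} {f g : α → ℝ} {c : ℝ} (hs : MeasurableSet s) (hst : s ⊆ t) (hc : 0 ≤ c)
    (hfg : ∀ y ∈ s, f y ≤ c * g y) :
    ∫⁻ y in s, ENNReal.ofReal (f y) ∂μ ≤ ENNReal.ofReal c * ∫⁻ y in t, ENNReal.ofReal (g y) ∂μ :=
  calc ∫⁻ y in s, ENNReal.ofReal (f y) ∂μ
      ≤ ∫⁻ y in s, ENNReal.ofReal c * ENNReal.ofReal (g y) ∂μ :=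
        setLIntegral_mono' hs fun y hy => by
          rw [← ENNReal.ofReal_mul hc]
          exact ENNReal.ofReal_le_ofReal (hfg y hy)
    _ = ENNReal.ofReal c * ∫⁻ y in s, ENNReal.ofReal (g y) ∂μ :=
        lintegral_const_mul' _ _ ENNReal.ofReal_ne_top
    _ ≤ ENNReal.ofReal c * ∫⁻ y in t, ENNReal.ofReal (g y) ∂μ :=
        mul_le_mul_right (lintegral_mono_set hst) _

lemma lintegral_Ioc_div_two_pow_le {μ : Measure ℝ} {f : ℝ → ℝ≥0∞} {δ : ℝ} {ε : ℝ≥0∞}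
    (hδ : 0 < δ) (hf : ∀ x ∈ Ioc 0 δ, ∫⁻ y in Ioc (x / 2) x, f y ∂μ ≤ ε) (n : ℕ) :
    ∫⁻ y in Ioc (δ / 2 ^ n) δ, f y ∂μ ≤ n * ε := by
  induction n with
  | zero => simp
  | succ n ih =>
    have hxn : δ / 2 ^ n ∈ Ioc 0 δ :=
      ⟨by positivity, div_le_self hδ.le (one_le_pow₀ one_le_two)⟩
    have hsplit :
        Ioc (δ / 2 ^ (n + 1)) δ = Ioc (δ / 2 ^ n / 2) (δ / 2 ^ n) ∪ Ioc (δ / 2 ^ n) δ := by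
      rw [pow_succ, ← div_div, Ioc_union_Ioc_eq_Ioc (half_le_self hxn.1.le) hxn.2]
    calc ∫⁻ y in Ioc (δ / 2 ^ (n + 1)) δ, f y ∂μ
        ≤ ∫⁻ y in Ioc (δ / 2 ^ n / 2) (δ / 2 ^ n), f y ∂μ + ∫⁻ y in Ioc (δ / 2 ^ n) δ, f y ∂μ := by
          rw [hsplit]
          exact lintegral_union_le _ _ _
      _ ≤ ε + n * ε := add_le_add (hf _ hxn) ih
      _ = (n + 1 : ℕ) * ε := by push_cast; ring

lemma measureSupport_eq_support (ν : Measure ℝ) : measureSupport ν = ν.support := by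
  ext x
  simp [measureSupport, Measure.support_eq_forall_isOpen, pos_iff_ne_zero, imp.swap]

section LevyMeasure

variable {ν : Measure ℝ}

lemma ae_nonneg_of_measureSupport_subset_Ici (h : measureSupport ν ⊆ Ici 0) :
    ∀ᵐ y ∂ν, 0 ≤ y :=
  mem_of_superset Measure.support_mem_ae fun _ hy => h ((measureSupport_eq_support ν).symm ▸ hy)

lemma integrableOn_sq_Icc_of_lintegral_min_lt_top
    (hν : ∫⁻ y, ENNReal.ofReal (min (y ^ 2) 1) ∂ν < ⊤) :
    IntegrableOn (fun y => y ^ 2) (Icc (-1) 1) ν := by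
  have hmin : Integrable (fun y : ℝ => min (y ^ 2) 1) ν :=
    ⟨by fun_prop, (hasFiniteIntegral_iff_ofReal (ae_of_all _ fun y => by positivity)).2 hν⟩
  refine hmin.integrableOn.congr_fun (fun y hy => min_eq_left ?_) measurableSet_Icc
  exact sq_le_one_iff_abs_le_one y |>.2 (abs_le.2 hy)

lemma lintegral_Ioc_half_le {x κ : ℝ} (hx : 0 < x)
    (hG : ∫⁻ y in Ioc 0 x, ENNReal.ofReal (y ^ 2) ∂ν ≤ ENNReal.ofReal (κ * x)) :
    ∫⁻ y in Ioc (x / 2) x, ENNReal.ofReal y ∂ν ≤ ENNReal.ofReal (2 * κ) :=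
  calc ∫⁻ y in Ioc (x / 2) x, ENNReal.ofReal y ∂ν
      ≤ ENNReal.ofReal (2 / x) * ∫⁻ y in Ioc 0 x, ENNReal.ofReal (y ^ 2) ∂ν :=
        setLIntegral_ofReal_le_ofReal_mul measurableSet_Ioc
          (Ioc_subset_Ioc_left (by positivity)) (by positivity) fun y hy => by
            rw [div_mul_eq_mul_div, le_div_iff₀ hx]
            nlinarith [hy.1, hy.2]
    _ ≤ ENNReal.ofReal (2 / x) * ENNReal.ofReal (κ * x) := mul_le_mul_right hG _
    _ = ENNReal.ofReal (2 * κ) := by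
        rw [← ENNReal.ofReal_mul (by positivity)]
        field_simp

lemma lintegral_Ioc_mul_min_le {δ κ z : ℝ} {n : ℕ} (hδ : 0 < δ) (hδ1 : δ ≤ 1)
    (hG : ∀ x ∈ Ioc 0 δ, ∫⁻ y in Ioc 0 x, ENNReal.ofReal (y ^ 2) ∂ν ≤ ENNReal.ofReal (κ * x))
    (hz : 0 < z) (hzδ : 1 / z ≤ δ) (hn : δ / 2 ^ n ≤ 1 / z) :
    ∫⁻ y in Ioc 0 1, ENNReal.ofReal (y * min (z * y) 1) ∂ν ≤
      ENNReal.ofReal κ + n * ENNReal.ofReal (2 * κ) +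
        ENNReal.ofReal (1 / δ) * ∫⁻ y in Ioc 0 1, ENNReal.ofReal (y ^ 2) ∂ν := by
  set F := fun y : ℝ => ENNReal.ofReal (y * min (z * y) 1)
  have hsplit : Ioc (0 : ℝ) 1 = Ioc 0 (1 / z) ∪ Ioc (1 / z) δ ∪ Ioc δ 1 := by
    rw [Ioc_union_Ioc_eq_Ioc (by positivity) hzδ, Ioc_union_Ioc_eq_Ioc hδ.le hδ1]
  have hsmall : ∫⁻ y in Ioc 0 (1 / z), F y ∂ν ≤ ENNReal.ofReal κ := by
    calc ∫⁻ y in Ioc 0 (1 / z), F y ∂ν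
        ≤ ENNReal.ofReal z * ∫⁻ y in Ioc 0 (1 / z), ENNReal.ofReal (y ^ 2) ∂ν :=
          setLIntegral_ofReal_le_ofReal_mul measurableSet_Ioc subset_rfl hz.le fun y hy => by
            nlinarith [min_le_left (z * y) 1, hy.1]
      _ ≤ ENNReal.ofReal z * ENNReal.ofReal (κ * (1 / z)) :=
          mul_le_mul_right (hG _ ⟨by positivity, hzδ⟩) _
      _ = ENNReal.ofReal κ := by
          rw [← ENNReal.ofReal_mul hz.le]
          field_simp
  have hmiddle : ∫⁻ y in Ioc (1 / z) δ, F y ∂ν ≤ n * ENNReal.ofReal (2 * κ) := by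
    calc ∫⁻ y in Ioc (1 / z) δ, F y ∂ν
        ≤ ∫⁻ y in Ioc (δ / 2 ^ n) δ, ENNReal.ofReal y ∂ν :=
          (lintegral_mono_set (Ioc_subset_Ioc_left hn)).trans' <|
            setLIntegral_mono' measurableSet_Ioc fun y hy => ENNReal.ofReal_le_ofReal <| by
              nlinarith [min_le_right (z * y) 1, (one_div_pos.2 hz).trans hy.1]
      _ ≤ n * ENNReal.ofReal (2 * κ) := lintegral_Ioc_div_two_pow_le hδ
          (fun x hx => lintegral_Ioc_half_le hx.1 (hG x hx)) n
  have hlarge : ∫⁻ y in Ioc δ 1, F y ∂ν ≤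
      ENNReal.ofReal (1 / δ) * ∫⁻ y in Ioc 0 1, ENNReal.ofReal (y ^ 2) ∂ν :=
    setLIntegral_ofReal_le_ofReal_mul measurableSet_Ioc (Ioc_subset_Ioc_left hδ.le)
      (by positivity) fun y hy => by
        have hy0 : 0 < y := hδ.trans hy.1
        have hle : y * min (z * y) 1 ≤ y := mul_le_of_le_one_right hy0.le (min_le_right _ _)
        rw [div_mul_eq_mul_div, one_mul, le_div_iff₀ hδ]
        nlinarith [mul_le_mul_of_nonneg_right hle hδ.le, hy.1]
  calc ∫⁻ y in Ioc 0 1, F y ∂ν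
      ≤ ∫⁻ y in Ioc 0 (1 / z), F y ∂ν + ∫⁻ y in Ioc (1 / z) δ, F y ∂ν
          + ∫⁻ y in Ioc δ 1, F y ∂ν := by
        rw [hsplit]
        exact (lintegral_union_le _ _ _).trans (add_le_add_left (lintegral_union_le _ _ _) _)
    _ ≤ _ := add_le_add (add_le_add hsmall hmiddle) hlarge

lemma jprime_zero_le (hν : ∫⁻ y, ENNReal.ofReal (min (y ^ 2) 1) ∂ν < ⊤)
    (hnonneg : ∀ᵐ y ∂ν, 0 ≤ y) (htail : IntegrableOn (fun y => y) (Ici 1) ν)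
    (a : ℝ) {z : ℝ} (hz : 0 ≤ z) :
    Jprime ν a 0 z ≤ -a + ∫ y in Ioc 0 1, y * min (z * y) 1 ∂ν := by
  have hsq : IntegrableOn (fun y => y ^ 2) (Icc 0 1) ν :=
    (integrableOn_sq_Icc_of_lintegral_min_lt_top hν).mono_set (Icc_subset_Icc_left (by norm_num))
  have hdom : Integrable
      (fun y => (Icc 0 1).indicator (fun y => z * y ^ 2) y + (Ici 1).indicator id y) ν :=
    (IntegrableOn.integrable_indicator (hsq.const_mul z) measurableSet_Icc).add
      (htail.integrable_indicator measurableSet_Ici)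
  have hf : Integrable
      (fun y => y * ((Ioo (-1 : ℝ) 1).indicator 1 y - Real.exp (-(z * y)))) ν := by
    refine hdom.mono' ?_ (hnonneg.mono fun y hy => abs_mul_indicator_sub_exp_le hy hz)
    exact (measurable_id.mul ((measurable_const.indicator measurableSet_Ioo).sub
      (by fun_prop))).aestronglyMeasurable
  have hg : Integrable (fun y => y * min (z * y) 1) (ν.restrict (Ioc 0 1)) := by
    refine ((hsq.mono_set Ioc_subset_Icc_self).const_mul z).mono' (by fun_prop)
      (ae_restrict_of_forall_mem measurableSet_Ioc fun y hy => ?_)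
    rw [Real.norm_eq_abs,
      abs_of_nonneg (mul_nonneg hy.1.le (le_min (mul_nonneg hz hy.1.le) zero_le_one))]
    nlinarith [min_le_left (z * y) 1, hy.1]
  rw [Jprime, zero_mul, add_zero, ← integral_indicator measurableSet_Ioc]
  exact add_le_add le_rfl <| integral_mono_ae hf
    (IntegrableOn.integrable_indicator hg measurableSet_Ioc)
    (hnonneg.mono fun y hy => mul_indicator_sub_exp_le hy hz)

lemma setIntegral_Ioc_mul_min_le (hsq : IntegrableOn (fun y => y ^ 2) (Ioc 0 1) ν)
    {δ κ z : ℝ} {n : ℕ} (hδ : 0 < δ) (hδ1 : δ ≤ 1) (hκ : 0 ≤ κ)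
    (hG : ∀ x ∈ Ioc 0 δ, ∫ y in Ioc 0 x, y ^ 2 ∂ν ≤ κ * x)
    (hz : 0 < z) (hzδ : 1 / z ≤ δ) (hn : δ / 2 ^ n ≤ 1 / z) :
    ∫ y in Ioc 0 1, y * min (z * y) 1 ∂ν ≤ κ + n * (2 * κ) + (∫ y in Ioc 0 1, y ^ 2 ∂ν) / δ := by
  have hlintegral_sq : ∀ x ≤ 1, ∫⁻ y in Ioc 0 x, ENNReal.ofReal (y ^ 2) ∂ν =
      ENNReal.ofReal (∫ y in Ioc 0 x, y ^ 2 ∂ν) := fun x hx =>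
    (ofReal_integral_eq_lintegral_ofReal (hsq.mono_set (Ioc_subset_Ioc_right hx))
      (ae_of_all _ fun y => sq_nonneg y)).symm
  have hI := lintegral_Ioc_mul_min_le hδ hδ1
    (fun x hx => (hlintegral_sq x (hx.2.trans hδ1)).trans_le (ENNReal.ofReal_le_ofReal (hG x hx)))
    hz hzδ hn
  rw [hlintegral_sq 1 le_rfl, ← ENNReal.ofReal_natCast, ← ENNReal.ofReal_mul (by positivity),
    ← ENNReal.ofReal_mul (by positivity), ← ENNReal.ofReal_add (by positivity) (by positivity),
    ← ENNReal.ofReal_add (by positivity) (by positivity), one_div_mul_eq_div] at hI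
  rw [integral_eq_lintegral_of_nonneg_ae (ae_restrict_of_forall_mem measurableSet_Ioc
    fun y hy => mul_nonneg hy.1.le (le_min (mul_nonneg hz.le hy.1.le) zero_le_one)) (by fun_prop)]
  exact ENNReal.toReal_le_of_le_ofReal (by positivity) hI

theorem eventually_jprime_le (hν : ∫⁻ y, ENNReal.ofReal (min (y ^ 2) 1) ∂ν < ⊤)
    (hnonneg : ∀ᵐ y ∂ν, 0 ≤ y) (htail : IntegrableOn (fun y => y) (Ici 1) ν)
    (hG : Tendsto (fun x => (∫ y in Ioc 0 x, y ^ 2 ∂ν) / x) (𝓝[>] 0) (𝓝 0))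
    (a : ℝ) {ε : ℝ} (hε : 0 < ε) :
    ∃ C, ∀ᶠ z in atTop, Jprime ν a 0 z ≤ ε * Real.log z + C := by
  have hsq : IntegrableOn (fun y => y ^ 2) (Ioc 0 1) ν :=
    (integrableOn_sq_Icc_of_lintegral_min_lt_top hν).mono_set
      (Ioc_subset_Icc_self.trans (Icc_subset_Icc_left (by norm_num)))
  -- `κ` is chosen so that `2 κ` per dyadic scale adds up to `ε log z` over `log₂ z` scales
  set κ := ε * Real.log 2 / 2
  obtain ⟨δ, ⟨hδ, hδ1⟩, hGδ⟩ := exists_forall_Ioc_le_mul_of_tendsto_div hG (by positivity : 0 < κ)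
  refine ⟨-a + κ + ε * Real.log 2 + (∫ y in Ioc 0 1, y ^ 2 ∂ν) / δ, ?_⟩
  filter_upwards [eventually_ge_atTop (1 / δ)] with z hz
  have hz0 : 0 < z := (one_div_pos.2 hδ).trans_le hz
  obtain ⟨n, hzn, hn⟩ := exists_nat_le_two_pow_of_one_le ((one_le_one_div hδ hδ1).trans hz)
  have hnδ : δ / 2 ^ n ≤ 1 / z :=
    (div_le_div_of_nonneg_right hδ1 (by positivity)).trans (one_div_le_one_div_of_le hz0 hzn)
  have hint := setIntegral_Ioc_mul_min_le hsq hδ hδ1 (by positivity) hGδ hz0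
    ((one_div_le hz0 hδ).2 hz) hnδ
  have hlog : n * (2 * κ) ≤ ε * Real.log z + ε * Real.log 2 := by
    calc n * (2 * κ) ≤ (Real.logb 2 z + 1) * (ε * Real.log 2) := by
          simpa [κ, mul_div_cancel₀] using mul_le_mul_of_nonneg_right hn (by positivity)
      _ = ε * Real.log z + ε * Real.log 2 := by
          rw [Real.logb, div_add_one (Real.log_pos one_lt_two).ne']
          field_simp
  calc Jprime ν a 0 z ≤ -a + ∫ y in Ioc 0 1, y * min (z * y) 1 ∂ν :=
        jprime_zero_le hν hnonneg htail a hz0.le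
    _ ≤ ε * Real.log z + (-a + κ + ε * Real.log 2 + (∫ y in Ioc 0 1, y ^ 2 ∂ν) / δ) := by
        linarith

end LevyMeasure

theorem jprime_limsup_top_of_rho_eq_one_general (ν : Measure ℝ) (a q : ℝ)
    (hν : ∫⁻ y, ENNReal.ofReal (min (y ^ 2) 1) ∂ν < ⊤)
    (hq0 : q = 0)
    (hsupp : measureSupport ν ⊆ Set.Ici 0)
    (htail : IntegrableOn (fun y => y) (Set.Ici 1) ν)
    (M : ℝ → ℝ)
    (hasymp : Filter.Tendsto
      (fun x => (∫ y in Set.Ioc (0 : ℝ) x, y ^ 2 ∂ν) / (x * M x))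
      (nhdsWithin 0 (Set.Ioi 0)) (nhds 1))
    (hM0 : Filter.Tendsto M (nhdsWithin 0 (Set.Ioi 0)) (nhds 0)) :
    ∀ c : ℝ, 0 < c →
      Filter.limsup (fun z : ℝ => ((Real.log z - c * Jprime ν a q z : ℝ) : EReal))
        Filter.atTop = ⊤ := by
  intro c hc
  subst hq0
  have hG := tendsto_div_zero_of_div_mul_tendsto_one hasymp hM0
  have hJ := fun ε (hε : 0 < ε) => eventually_jprime_le hν
    (ae_nonneg_of_measureSupport_subset_Ici hsupp) htail hG a hε
  exact (EReal.tendsto_coe_atTop.comp (tendsto_log_sub_mul_atTop hJ hc)).limsup_eq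

/-- The critical case `ρ = 1`: if `ν` has a density near `0`,
`∫_{(0,x]} y² ν(dy) ∼ x M(x)` as `x → 0⁺` with `M` slowly varying at `0`, `M(x) → 0`
as `x → 0⁺` and `∫₀¹ M(x)/x dx = +∞`, then `limsup_{z→∞} (ln z − c J′(z)) = +∞`
for every `c > 0`. -/
theorem jprime_limsup_top_of_rho_eq_one (ν : Measure ℝ) (a q : ℝ) (hq : 0 ≤ q)
    (hν : ∫⁻ y, ENNReal.ofReal (min (y ^ 2) 1) ∂ν < ⊤)
    (hq0 : q = 0)
    (hsupp : measureSupport ν ⊆ Set.Ici 0)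
    (htail : IntegrableOn (fun y => y) (Set.Ici 1) ν)
    (hac : ν.restrict (Set.Ioo 0 1) ≪ (volume : Measure ℝ))
    (M : ℝ → ℝ) (hMpos : ∀ x : ℝ, 0 < x → 0 < M x)
    (hMslow : ∀ x : ℝ, 0 < x →
      Filter.Tendsto (fun t => M (t * x) / M t) (nhdsWithin 0 (Set.Ioi 0)) (nhds 1))
    (hasymp : Filter.Tendsto
      (fun x => (∫ y in Set.Ioc (0 : ℝ) x, y ^ 2 ∂ν) / (x * M x))
      (nhdsWithin 0 (Set.Ioi 0)) (nhds 1))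
    (hM0 : Filter.Tendsto M (nhdsWithin 0 (Set.Ioi 0)) (nhds 0))
    (hMdiv : ∫⁻ x in Set.Ioc (0 : ℝ) 1, ENNReal.ofReal (M x / x) = ⊤) :
    ∀ c : ℝ, 0 < c →
      Filter.limsup (fun z : ℝ => ((Real.log z - c * Jprime ν a q z : ℝ) : EReal))
        Filter.atTop = ⊤ :=
  jprime_limsup_top_of_rho_eq_one_general ν a q hν hq0 hsupp htail M hasymp hM0
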